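/- Every free group is residually nilpotent: the intersection of all terms of its lower central series is the trivial subgroup. -/

import Mathlib

/-!
Magnus' argument. Send the generator `s` to `1 + X s` in the ring of power series over `ℤ`
in noncommuting variables `X s` subject to `X s ^ 2 = 0`. The units congruent to `1` modulo
terms of degree `≥ n + 1` form a descending central series, so they contain the image of the
`n`-th term of the lower central series, and their intersection is `1`. The map is injective:
a reduced word `s₁ ^ e₁ ⋯ sₖ ^ eₖ` (with `sᵢ ≠ sᵢ₊₁`, `eᵢ ≠ 0`) is sent to `∏ (1 + eᵢ X sᵢ)`,
whose coefficient at the word `s₁ ⋯ sₖ` is `e₁ ⋯ eₖ ≠ 0`.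
-/

open Monoid (CoprodI)

section FilteredRing

variable {R : Type*} [Ring R] (F : ℕ → AddSubgroup R) [SetLike.GradedMonoid F]

/-- Requiring `u, u⁻¹ ∈ F 0` makes this a subgroup without assuming `F` antitone. -/
def unitsFiltration (n : ℕ) : Subgroup Rˣ where
  carrier := {u | (u : R) - 1 ∈ F n ∧ (u : R) ∈ F 0 ∧ ((u⁻¹ : Rˣ) : R) ∈ F 0}
  one_mem' := by simpa using SetLike.GradedOne.one_mem
  mul_mem' := by
    rintro u v ⟨hu, hu₀, hu₀'⟩ ⟨hv, hv₀, hv₀'⟩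
    have key : ((u * v : Rˣ) : R) - 1 = ((u : R) - 1) * v + ((v : R) - 1) := by
      push_cast; noncomm_ring
    refine ⟨?_, by simpa using SetLike.mul_mem_graded hu₀ hv₀, ?_⟩
    · rw [key]
      exact add_mem (by simpa using SetLike.mul_mem_graded hu hv₀) hv
    · simpa using SetLike.mul_mem_graded hv₀' hu₀'
  inv_mem' := by
    rintro u ⟨hu, hu₀, hu₀'⟩
    have key : ((u⁻¹ : Rˣ) : R) - 1 = -(((u⁻¹ : Rˣ) : R) * ((u : R) - 1)) := by
      rw [mul_sub, Units.inv_mul, mul_one, neg_sub]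
    exact ⟨key ▸ neg_mem (by simpa using SetLike.mul_mem_graded hu₀' hu), hu₀',
      by simpa using hu₀⟩

variable {F}

open scoped commutatorElement

theorem unitsFiltration_le_zero (n : ℕ) : unitsFiltration F n ≤ unitsFiltration F 0 :=
  fun _ ⟨_, hu₀, hu₀'⟩ => ⟨sub_mem hu₀ SetLike.GradedOne.one_mem, hu₀, hu₀'⟩

theorem commutatorElement_mem_unitsFiltration {m n : ℕ} {u v : Rˣ}
    (hu : u ∈ unitsFiltration F m) (hv : v ∈ unitsFiltration F n) :
    ⁅u, v⁆ ∈ unitsFiltration F (m + n) := by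
  have hcomm : ⁅u, v⁆ ∈ unitsFiltration F 0 := by
    rw [commutatorElement_def]
    have hu₀ := unitsFiltration_le_zero m hu
    have hv₀ := unitsFiltration_le_zero n hv
    exact mul_mem (mul_mem (mul_mem hu₀ hv₀) (inv_mem hu₀)) (inv_mem hv₀)
  refine ⟨?_, hcomm.2⟩
  have key : ((⁅u, v⁆ : Rˣ) : R) - 1 =
      (((u : R) - 1) * ((v : R) - 1) - ((v : R) - 1) * ((u : R) - 1)) *
        (((u⁻¹ : Rˣ) : R) * ((v⁻¹ : Rˣ) : R)) := by
    calc ((⁅u, v⁆ : Rˣ) : R) - 1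
        = ((u : R) * v - v * u) * (((u⁻¹ : Rˣ) : R) * ((v⁻¹ : Rˣ) : R)) := by
          simp [commutatorElement_def, sub_mul, mul_assoc]
      _ = _ := by noncomm_ring
  rw [key]
  have hlin := sub_mem (SetLike.mul_mem_graded hu.1 hv.1)
    (add_comm m n ▸ SetLike.mul_mem_graded hv.1 hu.1)
  simpa using SetLike.mul_mem_graded hlin (SetLike.mul_mem_graded hu.2.2 hv.2.2)

theorem iInf_lowerCentralSeries_eq_bot_of_injective {G : Type*} [Group G] {φ : G →* Rˣ}
    (hφ : Function.Injective φ) (hφ₁ : ∀ g, φ g ∈ unitsFiltration F 1) (hF : ⨅ n, F n = ⊥) :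
    ⨅ n, (⊤ : Subgroup G).lowerCentralSeries n = ⊥ := by
  have hseries :
      Subgroup.IsDescendingCentralSeries fun n => (unitsFiltration F (n + 1)).comap φ :=
    ⟨eq_top_iff.mpr fun g _ => hφ₁ g, fun x n hx g => by
      simpa [map_commutatorElement] using commutatorElement_mem_unitsFiltration hx (hφ₁ g)⟩
  refine eq_bot_iff.mpr fun g hg => ?_
  have hφg : ∀ n, φ g ∈ unitsFiltration F (n + 1) := fun n =>
    Subgroup.descending_central_series_ge_lower _ hseries n (Subgroup.mem_iInf.mp hg n)
  have hzero : (φ g : R) - 1 ∈ ⨅ n, F n := AddSubgroup.mem_iInf.mpr fun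
    | 0 => (unitsFiltration_le_zero 1 (hφg 0)).1
    | n + 1 => (hφg n).1
  rw [hF, AddSubgroup.mem_bot, sub_eq_zero, Units.val_eq_one] at hzero
  exact (map_eq_one_iff φ hφ).mp hzero

end FilteredRing

section SquareZero

variable {R : Type*} [Ring R] {N : R}

def unitOfMulSelfEqZero (hN : N * N = 0) : Rˣ :=
  ⟨1 + N, 1 - N, by noncomm_ring; simp [hN], by noncomm_ring; simp [hN]⟩

theorem val_unitOfMulSelfEqZero_zpow (hN : N * N = 0) (k : ℤ) :
    ((unitOfMulSelfEqZero hN ^ k : Rˣ) : R) = 1 + k • N := by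
  induction k with
  | zero => simp
  | succ k ih =>
    rw [zpow_add_one, Units.val_mul, ih]
    simp only [unitOfMulSelfEqZero, add_smul, one_smul, mul_add, add_mul, mul_one, one_mul,
      smul_mul_assoc, hN, smul_zero]
    abel
  | pred k ih =>
    rw [zpow_sub_one, Units.val_mul, ih]
    simp only [unitOfMulSelfEqZero, Units.inv_mk, sub_smul, one_smul, mul_sub, add_mul, mul_one,
      one_mul, smul_mul_assoc, hN, smul_zero]
    abel

theorem unitOfMulSelfEqZero_mem_unitsFiltration {F : ℕ → AddSubgroup R} [SetLike.GradedMonoid F]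
    (hN : N * N = 0) {n : ℕ} (hn : N ∈ F n) (h₀ : N ∈ F 0) :
    unitOfMulSelfEqZero hN ∈ unitsFiltration F n :=
  ⟨by simpa [unitOfMulSelfEqZero] using hn, add_mem SetLike.GradedOne.one_mem h₀,
    sub_mem SetLike.GradedOne.one_mem h₀⟩

end SquareZero

section Magnus

variable {S : Type*}

/-- Operators raising degrees by at least `n`: `φ f w` only depends on the values of `f` at
words at least `n` letters shorter than `w`. -/
def orderFiltration (n : ℕ) : AddSubgroup (Module.End ℤ (List S → ℤ)) where
  carrier := {φ | ∀ f w, (∀ v : List S, v.length + n ≤ w.length → f v = 0) → φ f w = 0}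
  add_mem' ha hb f w hf := by simp [ha f w hf, hb f w hf]
  zero_mem' _ _ _ := rfl
  neg_mem' ha f w hf := by simp [ha f w hf]

instance : SetLike.GradedMonoid (orderFiltration (S := S)) where
  one_mem _ w hf := hf w (by simp)
  mul_mem _ _ _ _ hφ hψ f w hf := hφ _ w fun _ hv => hψ f _ fun u hu => hf u (by omega)

theorem orderFiltration_antitone : Antitone (orderFiltration (S := S)) :=
  fun _ _ hmn _ hφ f w hf => hφ f w fun v hv => hf v (by omega)

theorem iInf_orderFiltration : ⨅ n, orderFiltration (S := S) n = ⊥ := by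
  refine eq_bot_iff.mpr fun φ hφ => ?_
  ext f w
  exact (AddSubgroup.mem_iInf.mp hφ (w.length + 1)) f w fun v hv => by omega

variable [DecidableEq S]

/-- Left multiplication by `X s` on power series subject to `X s ^ 2 = 0`, acting on their
coefficient functions `List S → ℤ`. -/
def magnusX (s : S) : Module.End ℤ (List S → ℤ) where
  toFun f
    | a :: v => if a = s ∧ v.head? ≠ some s then f v else 0
    | [] => 0
  map_add' f g := by
    funext w
    rcases w with _ | ⟨a, v⟩
    · simp
    · by_cases h : a = s ∧ v.head? ≠ some s <;> simp [h]
  map_smul' c f := by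
    funext w
    rcases w with _ | ⟨a, v⟩
    · simp
    · by_cases h : a = s ∧ v.head? ≠ some s <;> simp [h]

@[simp]
theorem magnusX_apply_nil (s : S) (f : List S → ℤ) : magnusX s f [] = 0 := rfl

theorem magnusX_apply_cons (s a : S) (v : List S) (f : List S → ℤ) :
    magnusX s f (a :: v) = if a = s ∧ v.head? ≠ some s then f v else 0 := rfl

theorem magnusX_mul_self (s : S) : magnusX s * magnusX s = 0 := by
  ext f w
  rcases w with _ | ⟨a, _ | ⟨b, v⟩⟩
  · rfl
  · simp [magnusX_apply_cons]
  · by_cases hb : b = s <;> simp [magnusX_apply_cons, hb]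

theorem magnusX_mem_orderFiltration (s : S) : magnusX s ∈ orderFiltration 1 := by
  rintro f (_ | ⟨a, v⟩) hf
  · rfl
  · simp [magnusX_apply_cons, hf v (by simp)]

def magnusProd (L : List (S × ℤ)) : Module.End ℤ (List S → ℤ) :=
  (L.map fun p => 1 + p.2 • magnusX p.1).prod

theorem magnusProd_cons_apply_cons (p : S × ℤ) (L : List (S × ℤ)) (f : List S → ℤ) (a : S)
    (v : List S) : magnusProd (p :: L) f (a :: v) = magnusProd L f (a :: v) +
      p.2 * if a = p.1 ∧ v.head? ≠ some p.1 then magnusProd L f v else 0 := by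
  simp only [magnusProd, List.map_cons, List.prod_cons, Module.End.mul_apply,
    LinearMap.add_apply, LinearMap.smul_apply, Module.End.one_apply, Pi.add_apply,
    Pi.smul_apply, magnusX_apply_cons, smul_eq_mul]

theorem magnusProd_apply_single_of_length_lt (L : List (S × ℤ)) {v : List S}
    (hv : L.length < v.length) : magnusProd L (Pi.single [] 1) v = 0 := by
  induction L generalizing v with
  | nil => exact Pi.single_eq_of_ne (List.ne_nil_of_length_pos hv) _
  | cons p L ih =>
    obtain ⟨a, v, rfl⟩ := List.exists_cons_of_length_pos (Nat.zero_lt_of_lt hv)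
    simp only [List.length_cons] at hv
    rw [magnusProd_cons_apply_cons, ih (by simp; omega), ih (by omega)]
    simp

theorem magnusProd_apply_single_map_fst {L : List (S × ℤ)} (hL : L.IsChain (·.1 ≠ ·.1)) :
    magnusProd L (Pi.single [] 1) (L.map Prod.fst) = (L.map Prod.snd).prod := by
  induction L with
  | nil => simp [magnusProd]
  | cons p L ih =>
    have hhead : (L.map Prod.fst).head? ≠ some p.1 := by
      rcases L with _ | ⟨q, L⟩
      · simp
      · simpa [eq_comm] using (List.isChain_cons_cons.mp hL).1
    rw [List.map_cons, magnusProd_cons_apply_cons,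
      magnusProd_apply_single_of_length_lt _ (by simp), if_pos ⟨rfl, hhead⟩, ih hL.tail]
    simp

def magnusRep : CoprodI (fun _ : S => FreeGroup Unit) →* (Module.End ℤ (List S → ℤ))ˣ :=
  CoprodI.lift fun s => FreeGroup.lift fun _ => unitOfMulSelfEqZero (magnusX_mul_self s)

theorem magnusRep_of (s : S) (m : FreeGroup Unit) :
    magnusRep (CoprodI.of (i := s) m) =
      unitOfMulSelfEqZero (magnusX_mul_self s) ^ FreeGroup.equivIntOfUnique m := by
  conv_lhs => rw [← FreeGroup.equivIntOfUnique.symm_apply_apply m]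
  simp [magnusRep, FreeGroup.equivIntOfUnique]

theorem magnusRep_mem_unitsFiltration (x : CoprodI fun _ : S => FreeGroup Unit) :
    magnusRep x ∈ unitsFiltration orderFiltration 1 := by
  refine CoprodI.lift_range_le _ _ (fun s => ?_) ⟨x, rfl⟩
  rw [FreeGroup.range_lift_eq_closure, Subgroup.closure_le, Set.range_subset_iff]
  intro
  exact unitOfMulSelfEqZero_mem_unitsFiltration _ (magnusX_mem_orderFiltration s)
    (orderFiltration_antitone zero_le_one (magnusX_mem_orderFiltration s))

theorem val_magnusRep_prod (w : CoprodI.Word fun _ : S => FreeGroup Unit) :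
    (magnusRep w.prod : Module.End ℤ (List S → ℤ)) =
      magnusProd (w.toList.map fun l => (l.1, FreeGroup.equivIntOfUnique l.2)) := by
  rw [CoprodI.Word.prod, map_list_prod, ← Units.coeHom_apply, map_list_prod, magnusProd,
    List.map_map, List.map_map, List.map_map]
  congr 1
  refine List.map_congr_left fun l _ => ?_
  simp [magnusRep_of, val_unitOfMulSelfEqZero_zpow]

theorem magnusRep_injective : Function.Injective (magnusRep (S := S)) := by
  refine (injective_iff_map_eq_one _).mpr fun x hx => ?_
  obtain ⟨w, rfl⟩ : ∃ w : CoprodI.Word _, w.prod = x :=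
    ⟨_, CoprodI.Word.equiv.symm_apply_apply x⟩
  rcases eq_or_ne w.toList [] with hw | hw
  · simp [CoprodI.Word.prod, hw]
  set L := w.toList.map fun l => (l.1, FreeGroup.equivIntOfUnique l.2)
  have hL : L.IsChain (·.1 ≠ ·.1) := (List.isChain_map _).mpr w.chain_ne
  have hcoeff := magnusProd_apply_single_map_fst hL
  rw [← val_magnusRep_prod, hx, Units.val_one, Module.End.one_apply,
    Pi.single_eq_of_ne (by simpa [L] using hw)] at hcoeff
  refine absurd hcoeff.symm (List.prod_ne_zero ?_)
  simp only [L, List.map_map, List.mem_map, Function.comp_apply, not_exists, not_and]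
  intro l hl hzero
  exact w.ne_one l hl (FreeGroup.equivIntOfUnique.injective 
    (by simpa [FreeGroup.equivIntOfUnique] using hzero))

end Magnus

/-- Every free group is residually nilpotent: the intersection of all terms of
its lower central series is trivial. -/
theorem stmt4 (S : Type*) :
    (⨅ i : ℕ, (⊤ : Subgroup (FreeGroup S)).lowerCentralSeries i) = ⊥ := by
  classical
  exact iInf_lowerCentralSeries_eq_bot_of_injective
    (φ := magnusRep.comp freeGroupEquivCoprodI.toMonoidHom)
    (magnusRep_injective.comp freeGroupEquivCoprodI.injective)
    (fun _ => magnusRep_mem_unitsFiltration _) iInf_orderFiltration
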